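/- arXiv:2605.23073 — 5 statements merged into one kernel-verified Lean document; each statement's English description precedes it below -/
import Mathlib

section
/- For any finite connected simple graph G on n vertices, the bandwidth satisfies B(G) ≤ n − diam(G), where diam(G) is the diameter of G (the maximum over pairs of vertices of the shortest-path distance). -/
/-!
Fix a vertex `u` and list the vertices by increasing distance from `u`. If `u` has eccentricity
`d = diam G`, every level `0, …, d` is inhabited, so a vertex `x` at level `i` has at least `i`
vertices before it and a vertex `y` at level `j` at least `d - j` vertices after it. An edge joins
levels differing by at most one, so its endpoints are at most `n - d` apart in this listing.
-/

/-- The bandwidth of a finite graph. -/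
noncomputable def bandwidth {V : Type*} [Fintype V] (G : SimpleGraph V) : ℕ :=
  sInf {k : ℕ | ∃ σ : V ≃ Fin (Fintype.card V),
    ∀ u v : V, G.Adj u v → (((σ u).val : ℤ) - ((σ v).val : ℤ)).natAbs ≤ k}

/-- The diameter of a graph: the maximum over pairs of vertices of the
shortest-path distance. -/
noncomputable def graphDiam {V : Type*} [Fintype V] (G : SimpleGraph V) : ℕ :=
  sSup {d : ℕ | ∃ u v : V, G.dist u v = d}

open Finset

namespace SimpleGraph

variable {V : Type*} {G : SimpleGraph V}

lemma Reachable.exists_dist_eq_of_le {u v : V} (h : G.Reachable u v) {i : ℕ}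
    (hi : i ≤ G.dist u v) : ∃ x, G.dist u x = i := by
  obtain ⟨p, hp⟩ := h.exists_walk_length_eq_dist
  refine ⟨p.getVert i, le_antisymm ?_ ?_⟩
  · have htake := G.dist_le (p.take i)
    rw [Walk.take_length] at htake
    omega
  · have hdrop := G.dist_le (p.drop i)
    have htri := (p.take i).reachable.dist_triangle_left v
    rw [Walk.drop_length] at hdrop
    omega

lemma Connected.graphDiam_eq_diam [Fintype V] (hconn : G.Connected) : graphDiam G = G.diam := by
  have := hconn.nonempty
  refine IsGreatest.csSup_eq ⟨G.exists_dist_eq_diam, ?_⟩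
  rintro _ ⟨u, v, rfl⟩
  exact G.dist_le_diam (connected_iff_ediam_ne_top.mp hconn)

end SimpleGraph

section Layering

variable {V α : Type*} [Fintype V] [LinearOrder α] {n : ℕ}

lemma exists_equivFin_lt_of_lt (f : V → α) :
    ∃ σ : V ≃ Fin (Fintype.card V), ∀ x y, f x < f y → σ x < σ y := by
  let e := Fintype.equivFin V
  let _ : LinearOrder V := LinearOrder.lift' (fun x => toLex (f x, e x)) fun x y hxy =>
    e.injective (congrArg (fun p => (ofLex p).2) hxy)
  exact ⟨(monoEquivOfFin V rfl).symm, fun x y hxy =>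
    (monoEquivOfFin V rfl).symm.strictMono (Prod.Lex.left _ _ hxy)⟩

lemma card_filter_lt_le_of_lt_imp_lt {f : V → α} {σ : V ≃ Fin n}
    (hσ : ∀ x y, f x < f y → σ x < σ y) (x : V) : #{y | f y < f x} ≤ σ x := by
  calc #{y | f y < f x} ≤ #(Iio (σ x)) :=
        card_le_card_of_injOn σ (fun y hy => by simpa using hσ y x (by simpa using hy))
          σ.injective.injOn
    _ = σ x := Fin.card_Iio _

lemma card_filter_gt_le_of_lt_imp_lt {f : V → α} {σ : V ≃ Fin n}
    (hσ : ∀ x y, f x < f y → σ x < σ y) (x : V) : #{y | f x < f y} ≤ n - 1 - σ x := by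
  have := card_filter_lt_le_of_lt_imp_lt (f := OrderDual.toDual ∘ f) (σ := σ.trans Fin.revPerm)
    (fun x y hxy => by simpa using hσ y x hxy) x
  simp only [Function.comp_apply, OrderDual.toDual_lt_toDual, Equiv.trans_apply,
    Fin.revPerm_apply, Fin.val_rev] at this
  omega

end Layering

theorem bandwidth_le_card_sub_of_layering {V : Type*} [Fintype V] (G : SimpleGraph V)
    (f : V → ℕ) (d : ℕ) (hf_le : ∀ x, f x ≤ d) (hf_surj : ∀ i ≤ d, ∃ x, f x = i)
    (hf_adj : ∀ x y, G.Adj x y → f y ≤ f x + 1) :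
    bandwidth G ≤ Fintype.card V - d := by
  obtain ⟨σ, hσ⟩ := exists_equivFin_lt_of_lt f
  have before (x : V) : f x ≤ σ x := by
    calc f x = #(range (f x)) := (card_range _).symm
      _ ≤ #{y | f y < f x} := card_le_card_of_surjOn f fun i hi => by
          obtain ⟨y, rfl⟩ := hf_surj i ((mem_range.mp hi).trans_le (hf_le x)).le
          exact ⟨y, by simpa using hi, rfl⟩
      _ ≤ σ x := card_filter_lt_le_of_lt_imp_lt hσ x
  have after (x : V) : d - f x ≤ Fintype.card V - 1 - σ x := by
    calc d - f x = #(Ioc (f x) d) := (Nat.card_Ioc _ _).symm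
      _ ≤ #{y | f x < f y} := card_le_card_of_surjOn f fun i hi => by
          obtain ⟨y, rfl⟩ := hf_surj i (mem_Ioc.mp hi).2
          exact ⟨y, by simpa using (mem_Ioc.mp hi).1, rfl⟩
      _ ≤ Fintype.card V - 1 - σ x := card_filter_gt_le_of_lt_imp_lt hσ x
  refine Nat.sInf_le ⟨σ, fun x y hxy => ?_⟩
  have := And.intro (hf_adj x y hxy) (hf_adj y x hxy.symm)
  have := And.intro (σ x).isLt (σ y).isLt
  have := And.intro (before x) (before y)
  have := And.intro (after x) (after y)
  omega

theorem bandwidth_le_card_sub_diam_general {V : Type*} [Fintype V]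
    (G : SimpleGraph V) (hconn : G.Connected) :
    bandwidth G ≤ Fintype.card V - graphDiam G := by
  have := hconn.nonempty
  obtain ⟨u, v, huv⟩ := G.exists_dist_eq_diam
  rw [hconn.graphDiam_eq_diam]
  refine bandwidth_le_card_sub_of_layering G (G.dist u) G.diam
    (fun x => G.dist_le_diam (SimpleGraph.connected_iff_ediam_ne_top.mp hconn))
    (fun i hi => (hconn u v).exists_dist_eq_of_le (huv ▸ hi)) fun x y hxy => ?_
  rcases hxy.diff_dist_adj (u := u) with h | h | h <;> omega

/-- For any finite connected simple graph on `n ≥ 2` vertices,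
`B(G) ≤ n − diam(G)`. -/
theorem bandwidth_le_card_sub_diam {V : Type*} [Fintype V]
    (G : SimpleGraph V) (hconn : G.Connected) (hn : 2 ≤ Fintype.card V) :
    bandwidth G ≤ Fintype.card V - graphDiam G :=
  bandwidth_le_card_sub_diam_general G hconn
end

section
/- Let G be a graph on n vertices that is the union of a Hamiltonian path with vertex sequence v_1, ..., v_n and one extra edge (an 'arc'). Then B(G) ≤ 2. -/
lemma bandwidth_le_of_injective {V : Type*} [Fintype V] (G : SimpleGraph V) {k : ℕ}
    (f : V → ℕ) (hf_lt : ∀ v, f v < Fintype.card V) (hf : Function.Injective f)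
    (hG : ∀ u v, G.Adj u v → ((f u : ℤ) - f v).natAbs ≤ k) :
    bandwidth G ≤ k := by
  let g : V → Fin (Fintype.card V) := fun v => ⟨f v, hf_lt v⟩
  have hg : Function.Injective g := fun u v h => hf (congrArg Fin.val h)
  have hg_bij : Function.Bijective g := (Fintype.bijective_iff_injective_and_card g).2
    ⟨hg, (Fintype.card_fin _).symm⟩
  exact Nat.sInf_le ⟨Equiv.ofBijective g hg_bij, hG⟩

/-- The layout of `0, …, n - 1` that folds `0, …, s` at its midpoint onto the positions
`n - 1 - s, …, n - 1` and puts the tail `s + 1, …, n - 1` on `n - 2 - s, …, 0`. -/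
def foldLayout (n s j : ℕ) : ℕ :=
  if s < j then n - 1 - j
  else if 2 * j ≤ s then (n - 1 - s) + 2 * j
  else (n - 1 - s) + 2 * (s - j) + 1

section foldLayout

variable {n s : ℕ}

lemma foldLayout_lt (hs : s < n) {j : ℕ} (hj : j < n) : foldLayout n s j < n := by
  unfold foldLayout; split_ifs <;> omega

lemma foldLayout_injOn (hs : s < n) : Set.InjOn (foldLayout n s) (Set.Iio n) := by
  intro i hi j hj h
  simp only [Set.mem_Iio] at hi hj
  unfold foldLayout at h; split_ifs at h <;> omega

lemma foldLayout_succ (j : ℕ) :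
    ((foldLayout n s j : ℤ) - foldLayout n s (j + 1)).natAbs ≤ 2 := by
  unfold foldLayout; split_ifs <;> omega

lemma foldLayout_sub_self {j : ℕ} (hj : j ≤ s) :
    ((foldLayout n s j : ℤ) - foldLayout n s (s - j)).natAbs ≤ 1 := by
  unfold foldLayout; split_ifs <;> omega

end foldLayout

lemma exists_layout_of_arc {n a b : ℕ} (ha : a < n) (hb : b < n) :
    ∃ f : ℕ → ℕ, (∀ j < n, f j < n) ∧ Set.InjOn f (Set.Iio n) ∧
      (∀ j, j + 1 < n → ((f j : ℤ) - f (j + 1)).natAbs ≤ 2) ∧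
      ((f a : ℤ) - f b).natAbs ≤ 2 := by
  by_cases hs : a + b < n
  · refine ⟨foldLayout n (a + b), fun j => foldLayout_lt hs, foldLayout_injOn hs,
      fun j _ => foldLayout_succ j, ?_⟩
    have := foldLayout_sub_self (n := n) (Nat.le_add_right a b)
    rw [Nat.add_sub_cancel_left] at this
    omega
  · set s := (n - 1 - a) + (n - 1 - b)
    have hs' : s < n := by omega
    refine ⟨fun j => foldLayout n s (n - 1 - j), fun j hj => foldLayout_lt hs' (by omega),
      ?_, fun j hj => ?_, ?_⟩
    · intro i hi j hj h
      simp only [Set.mem_Iio] at hi hj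
      have := foldLayout_injOn hs' (Set.mem_Iio.2 (by omega : n - 1 - i < n))
        (Set.mem_Iio.2 (by omega : n - 1 - j < n)) h
      omega
    · have := foldLayout_succ (n := n) (s := s) (n - 1 - (j + 1))
      rw [show n - 1 - (j + 1) + 1 = n - 1 - j by omega] at this
      dsimp only
      omega
    · have := foldLayout_sub_self (n := n) (s := s) (j := n - 1 - a) (by omega)
      rw [show s - (n - 1 - a) = n - 1 - b by omega] at this
      dsimp only
      omega

theorem bandwidth_le_two_of_one_arc_general {n : ℕ} (G : SimpleGraph (Fin n)) (a b : Fin n)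
    (hadj : ∀ u v : Fin n, G.Adj u v ↔
      ((u.val : ℤ) - (v.val : ℤ)).natAbs = 1 ∨ (u = a ∧ v = b) ∨ (u = b ∧ v = a)) :
    bandwidth G ≤ 2 := by
  obtain ⟨f, hf_lt, hf_inj, hf_path, hf_arc⟩ := exists_layout_of_arc a.isLt b.isLt
  refine bandwidth_le_of_injective G (fun v => f v) (fun v => ?_) ?_ fun u v huv => ?_
  · simpa only [Fintype.card_fin] using hf_lt v v.isLt
  · exact fun u v h => Fin.ext (hf_inj u.isLt v.isLt h)
  rcases (hadj u v).1 huv with h | ⟨rfl, rfl⟩ | ⟨rfl, rfl⟩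
  · rcases (by omega : u.val = v.val + 1 ∨ v.val = u.val + 1) with h' | h'
    · have := hf_path v (by omega)
      rw [h']; omega
    · have := hf_path u (by omega)
      rw [h']; omega
  · exact hf_arc
  · omega

/-- A graph consisting of a Hamiltonian path `v_1, …, v_n` (here the vertices
`0, …, n-1` of `Fin n` in order) together with a single extra arc `{a, b}` with
`|a − b| > 1` has bandwidth at most `2`. -/
theorem bandwidth_le_two_of_one_arc {n : ℕ} (G : SimpleGraph (Fin n)) (a b : Fin n)
    (hab : 1 < (((a : Fin n).val : ℤ) - (b.val : ℤ)).natAbs)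
    (hadj : ∀ u v : Fin n, G.Adj u v ↔
      ((u.val : ℤ) - (v.val : ℤ)).natAbs = 1 ∨ (u = a ∧ v = b) ∨ (u = b ∧ v = a)) :
    bandwidth G ≤ 2 :=
  bandwidth_le_two_of_one_arc_general G a b hadj
end

section
/- Line folding upper bound on bandwidth: Let G be a sparse Hamiltonian graph whose Hamiltonian path visits vertices indexed 1,...,n in order, together with a set of arcs E_arc. Suppose h : [n] → [n] is a function such that |h(i+1) − h(i)| = 1 for all i ∈ [n−1] (property P1), h(u) = h(v) for every arc {u,v} ∈ E_arc (property P2), and h is piecewise monotone with at most L maximal monotone segments, i.e. there exist breakpoints 1 = d_0 < d_1 < ... < d_{L−1} < d_L = n such that h is monotone on each interval [d_j, d_{j+1}]. Then B(G) ≤ L. -/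
lemma lex_aux {n a b x y : ℕ} (hx : x < n) (hy : y < n) :
    a * n + x < b * n + y ↔ a < b ∨ (a = b ∧ x < y) := by
  constructor
  · intro hlt
    rcases lt_trichotomy a b with hab | hab | hab
    · exact Or.inl hab
    · refine Or.inr ⟨hab, ?_⟩
      subst hab
      omega
    · exfalso
      have : (b + 1) * n ≤ a * n := Nat.mul_le_mul_right n hab
      nlinarith
  · rintro (hab | ⟨rfl, hxy⟩)
    · have : (a + 1) * n ≤ b * n := Nat.mul_le_mul_right n hab
      nlinarith
    · omega

/-- Line-folding upper bound on bandwidth: if a sparse Hamiltonian graph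
(Hamiltonian path on vertices `0, …, n-1` in order plus a set of arcs `Earc`)
admits a folding `h` satisfying P1 (consecutive values differ by exactly 1),
P2 (the feet of each arc get the same value), and `h` is piecewise monotone
with breakpoints `d_0 = 0 < d_1 < ⋯ < d_L = n - 1`, then `B(G) ≤ L`. -/
theorem bandwidth_le_of_folding {n L : ℕ} (G : SimpleGraph (Fin n))
    (Earc : Set (Fin n × Fin n))
    (harc : ∀ e ∈ Earc, 1 < ((e.1.val : ℤ) - (e.2.val : ℤ)).natAbs)
    (hadj : ∀ u v : Fin n, G.Adj u v ↔
      ((u.val : ℤ) - (v.val : ℤ)).natAbs = 1 ∨ (u, v) ∈ Earc ∨ (v, u) ∈ Earc)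
    (h : Fin n → Fin n)
    (hP1 : ∀ i : Fin n, ∀ hi : i.val + 1 < n,
      (((h i).val : ℤ) - ((h ⟨i.val + 1, hi⟩).val : ℤ)).natAbs = 1)
    (hP2 : ∀ e ∈ Earc, h e.1 = h e.2)
    (d : Fin (L + 1) → ℕ)
    (hd0 : d 0 = 0) (hdL : d (Fin.last L) = n - 1) (hmono : StrictMono d)
    (hpiece : ∀ j : Fin L,
      MonotoneOn (fun i : Fin n => (h i).val)
        {i : Fin n | d j.castSucc ≤ i.val ∧ i.val ≤ d j.succ} ∨
      AntitoneOn (fun i : Fin n => (h i).val)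
        {i : Fin n | d j.castSucc ≤ i.val ∧ i.val ≤ d j.succ}) :
    bandwidth G ≤ L := by
  classical
  -- the sorting key
  set f : Fin n → ℕ := fun i => (h i).val * n + i.val with hfdef
  have hflt : ∀ i j : Fin n, f i < f j ↔
      ((h i).val < (h j).val ∨ (h i = h j ∧ i.val < j.val)) := by
    intro i j
    rw [hfdef]
    simp only []
    rw [lex_aux i.isLt j.isLt, Fin.ext_iff]
  have hfinj : Function.Injective f := by
    intro i j hij
    have h1 : ((h i).val * n + i.val) % n = ((h j).val * n + j.val) % n := by
      rw [hfdef] at hij; exact congrArg (· % n) hij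
    rw [Nat.mul_comm (h i).val n, Nat.mul_comm (h j).val n, Nat.mul_add_mod,
      Nat.mul_add_mod, Nat.mod_eq_of_lt i.isLt, Nat.mod_eq_of_lt j.isLt] at h1
    exact Fin.ext h1
  -- the sorting equivalence
  have hcard : (Finset.image f Finset.univ).card = n := by
    rw [Finset.card_image_of_injective _ hfinj, Finset.card_univ, Fintype.card_fin]
  let g : Fin n → {x // x ∈ Finset.image f Finset.univ} :=
    fun i => ⟨f i, Finset.mem_image_of_mem f (Finset.mem_univ i)⟩
  have hginj : Function.Injective g := fun i j hij => hfinj (congrArg Subtype.val hij)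
  have hgbij : Function.Bijective g := (Fintype.bijective_iff_injective_and_card g).mpr
    ⟨hginj, by simp [Fintype.card_coe, hcard]⟩
  let e : Fin n ≃ Fin n := (Equiv.ofBijective g hgbij).trans
    ((Finset.image f Finset.univ).orderIsoOfFin hcard).symm.toEquiv
  have he : ∀ i j, e i < e j ↔ f i < f j := by
    intro i j
    show ((Finset.image f Finset.univ).orderIsoOfFin hcard).symm (g i) <
      ((Finset.image f Finset.univ).orderIsoOfFin hcard).symm (g j) ↔ _
    rw [OrderIso.lt_iff_lt]
    exact Iff.rfl
  have hcount : ∀ u v : Fin n, e u < e v →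
      (e v).val - (e u).val
        = (Finset.univ.filter (fun w => f u < f w ∧ f w < f v)).card + 1 := by
    intro u v huv
    have h1 : (Finset.univ.filter (fun w => f u < f w ∧ f w < f v)).card
        = (Finset.Ioo (e u) (e v)).card := by
      apply Finset.card_bij (fun w _ => e w)
      · intro a ha
        simp only [Finset.mem_filter, Finset.mem_univ, true_and] at ha
        simp only [Finset.mem_Ioo]
        exact ⟨(he u a).mpr ha.1, (he a v).mpr ha.2⟩
      · intro a₁ _ a₂ _ hh
        exact e.injective hh
      · intro b hb
        simp only [Finset.mem_Ioo] at hb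
        refine ⟨e.symm b, ?_, by simp⟩
        simp only [Finset.mem_filter, Finset.mem_univ, true_and]
        constructor
        · rw [← he]; simpa using hb.1
        · rw [← he]; simpa using hb.2
    rw [h1, Fin.card_Ioo]
    have h2 : (e u).val < (e v).val := huv
    omega
  -- strict injectivity of `h` on each monotone segment
  have hinj : ∀ (j : Fin L) (x y : Fin n), d j.castSucc ≤ x.val → x.val ≤ y.val →
      y.val ≤ d j.succ → h x = h y → x = y := by
    intro j x y hx hxy hy hxyh
    by_contra hne
    have hxlty : x.val < y.val := lt_of_le_of_ne hxy (fun hh => hne (Fin.ext hh))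
    have hx1 : x.val + 1 < n := by have := y.isLt; omega
    have hmx : x ∈ {i : Fin n | d j.castSucc ≤ i.val ∧ i.val ≤ d j.succ} := by
      show d j.castSucc ≤ x.val ∧ x.val ≤ d j.succ
      omega
    have hmx1 : (⟨x.val + 1, hx1⟩ : Fin n) ∈
        {i : Fin n | d j.castSucc ≤ i.val ∧ i.val ≤ d j.succ} := by
      show d j.castSucc ≤ x.val + 1 ∧ x.val + 1 ≤ d j.succ
      omega
    have hmy : y ∈ {i : Fin n | d j.castSucc ≤ i.val ∧ i.val ≤ d j.succ} := by
      show d j.castSucc ≤ y.val ∧ y.val ≤ d j.succ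
      omega
    have hle1 : x ≤ (⟨x.val + 1, hx1⟩ : Fin n) := by
      rw [Fin.le_def]; exact Nat.le_succ x.val
    have hle2 : (⟨x.val + 1, hx1⟩ : Fin n) ≤ y := by
      rw [Fin.le_def]; exact hxlty
    have hP := hP1 x hx1
    have hval : (h x).val = (h y).val := congrArg Fin.val hxyh
    rcases hpiece j with hm | hm
    · have a1 : (h x).val ≤ (h ⟨x.val + 1, hx1⟩).val := hm hmx hmx1 hle1
      have a2 : (h ⟨x.val + 1, hx1⟩).val ≤ (h y).val := hm hmx1 hmy hle2
      omega
    · have a1 : (h ⟨x.val + 1, hx1⟩).val ≤ (h x).val := hm hmx hmx1 hle1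
      have a2 : (h y).val ≤ (h ⟨x.val + 1, hx1⟩).val := hm hmx1 hmy hle2
      omega
  -- the key combinatorial bound
  have key : ∀ u v : Fin n, G.Adj u v → f u < f v →
      (Finset.univ.filter (fun w => f u < f w ∧ f w < f v)).card + 1 ≤ L := by
    intro u v hAdj hfuv
    have hune : u ≠ v := SimpleGraph.Adj.ne hAdj
    have hvne : u.val ≠ v.val := fun hh => hune (Fin.ext hh)
    have hn2 : 2 ≤ n := by have := u.isLt; have := v.isLt; omega
    have hL : 0 < L := by
      rcases Nat.eq_zero_or_pos L with h0 | h0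
      · exfalso
        subst h0
        have hl0 : (Fin.last 0) = (0 : Fin 1) := rfl
        rw [hl0, hd0] at hdL
        omega
      · exact h0
    -- the segment-assignment function s
    have hsne : ∀ w : Fin n,
        (Finset.univ.filter (fun j : Fin L => w.val ≤ d j.succ)).Nonempty := by
      intro w
      refine ⟨⟨L - 1, by omega⟩, ?_⟩
      simp only [Finset.mem_filter, Finset.mem_univ, true_and]
      have hsucc : (⟨L - 1, by omega⟩ : Fin L).succ = Fin.last L := by
        apply Fin.ext
        simp [Fin.val_succ]
        omega
      rw [hsucc, hdL]
      have := w.isLt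
      omega
    set s : Fin n → Fin L :=
      fun w => (Finset.univ.filter (fun j : Fin L => w.val ≤ d j.succ)).min' (hsne w)
      with hsdef
    have hs1 : ∀ w, w.val ≤ d (s w).succ := by
      intro w
      have hh := Finset.min'_mem _ (hsne w)
      simp only [Finset.mem_filter, Finset.mem_univ, true_and] at hh
      exact hh
    have hs2 : ∀ w, d (s w).castSucc ≤ w.val := by
      intro w
      rcases Nat.eq_zero_or_pos (s w).val with h0 | h0
      · have hc0 : (s w).castSucc = 0 := by
          apply Fin.ext; simpa using h0
        rw [hc0, hd0]
        exact Nat.zero_le _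
      · by_contra hcon
        push_neg at hcon
        have hmem : (⟨(s w).val - 1, by omega⟩ : Fin L) ∈
            Finset.univ.filter (fun j : Fin L => w.val ≤ d j.succ) := by
          simp only [Finset.mem_filter, Finset.mem_univ, true_and]
          have hsucc : (⟨(s w).val - 1, by omega⟩ : Fin L).succ = (s w).castSucc := by
            apply Fin.ext; simp [Fin.val_succ]; omega
          rw [hsucc]
          omega
        have hle : s w ≤ (⟨(s w).val - 1, by omega⟩ : Fin L) :=
          Finset.min'_le _ _ hmem
        have hle' : (s w).val ≤ (s w).val - 1 := hle
        omega
    set T := Finset.univ.filter (fun w => f u < f w ∧ f w < f v) with hTdef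
    rw [hadj] at hAdj
    -- arc case
    have harcCase : h u = h v → T.card + 1 ≤ L := by
      intro hhv
      have hval : (h u).val = (h v).val := congrArg Fin.val hhv
      have hTlevel : ∀ w ∈ T, h w = h u := by
        intro w hw
        rw [hTdef, Finset.mem_filter] at hw
        have l1 := (hflt u w).mp hw.2.1
        have l2 := (hflt w v).mp hw.2.2
        apply Fin.ext
        rcases l1 with l1 | ⟨l1e, l1i⟩
        · rcases l2 with l2 | ⟨l2e, l2i⟩
          · omega
          · have := congrArg Fin.val l2e; omega
        · have := congrArg Fin.val l1e; omega
      have hsub : ∀ x ∈ insert u (insert v T), h x = h u := by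
        intro x hx
        rcases Finset.mem_insert.mp hx with rfl | hx
        · rfl
        · rcases Finset.mem_insert.mp hx with rfl | hx
          · exact hhv.symm
          · exact hTlevel x hx
      have hinjOn : Set.InjOn s ((insert u (insert v T) : Finset (Fin n)) : Set (Fin n)) := by
        intro x hx y hy hxy
        have hhx := hsub x (Finset.mem_coe.mp hx)
        have hhy := hsub y (Finset.mem_coe.mp hy)
        rcases le_total x.val y.val with hle | hle
        · exact hinj (s x) x y (hs2 x) hle (by rw [hxy]; exact hs1 y)
            (hhx.trans hhy.symm)
        · exact (hinj (s y) y x (hs2 y) hle (by rw [← hxy]; exact hs1 x)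
            (hhy.trans hhx.symm)).symm
      have hcard2 : (insert u (insert v T)).card ≤ L := by
        calc (insert u (insert v T)).card ≤ (Finset.univ : Finset (Fin L)).card :=
              Finset.card_le_card_of_injOn s (fun _ _ => Finset.mem_univ _) hinjOn
          _ = L := by simp
      have huT : u ∉ T := by
        rw [hTdef]
        simp only [Finset.mem_filter, Finset.mem_univ, true_and, not_and]
        omega
      have hvT : v ∉ T := by
        rw [hTdef]
        simp only [Finset.mem_filter, Finset.mem_univ, true_and, not_and]
        omega
      have huvT : u ∉ insert v T := by
        intro hmem
        rcases Finset.mem_insert.mp hmem with hh | hh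
        · exact hune hh
        · exact huT hh
      rw [Finset.card_insert_of_notMem huvT, Finset.card_insert_of_notMem hvT] at hcard2
      omega
    -- path-edge case
    have hpathCase : ((u.val : ℤ) - v.val).natAbs = 1 → T.card + 1 ≤ L := by
      intro hidx
      have hidx' : u.val + 1 = v.val ∨ v.val + 1 = u.val := by omega
      have hc : (h v).val = (h u).val + 1 := by
        rcases hidx' with hi | hi
        · have hlt : u.val + 1 < n := by rw [hi]; exact v.isLt
          have hp := hP1 u hlt
          have hv' : (⟨u.val + 1, hlt⟩ : Fin n) = v := Fin.ext hi
          rw [hv'] at hp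
          have l1 := (hflt u v).mp hfuv
          rcases l1 with l1 | ⟨l1e, _⟩
          · omega
          · exfalso; have := congrArg Fin.val l1e; omega
        · have hlt : v.val + 1 < n := by rw [hi]; exact u.isLt
          have hp := hP1 v hlt
          have hu' : (⟨v.val + 1, hlt⟩ : Fin n) = u := Fin.ext hi
          rw [hu'] at hp
          have l1 := (hflt u v).mp hfuv
          rcases l1 with l1 | ⟨l1e, _⟩
          · omega
          · exfalso; have := congrArg Fin.val l1e; omega
      have hT : ∀ w ∈ T, (h w = h u ∧ u.val < w.val) ∨ (h w = h v ∧ w.val < v.val) := by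
        intro w hw
        rw [hTdef, Finset.mem_filter] at hw
        have l1 := (hflt u w).mp hw.2.1
        have l2 := (hflt w v).mp hw.2.2
        rcases l1 with l1 | ⟨l1e, l1i⟩
        · rcases l2 with l2 | ⟨l2e, l2i⟩
          · exfalso; omega
          · exact Or.inr ⟨l2e, l2i⟩
        · exact Or.inl ⟨l1e.symm, l1i⟩
      -- a segment j₀ containing both endpoints of the path edge
      obtain ⟨j₀, hj₀u1, hj₀v1, hj₀u2, hj₀v2⟩ :
          ∃ j₀ : Fin L, d j₀.castSucc ≤ u.val ∧ d j₀.castSucc ≤ v.val ∧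
            u.val ≤ d j₀.succ ∧ v.val ≤ d j₀.succ := by
        set m := min u.val v.val with hm
        have hmne : (Finset.univ.filter (fun j : Fin L => d j.castSucc ≤ m)).Nonempty := by
          refine ⟨⟨0, hL⟩, ?_⟩
          simp only [Finset.mem_filter, Finset.mem_univ, true_and]
          have hc0 : ((⟨0, hL⟩ : Fin L)).castSucc = 0 := rfl
          rw [hc0, hd0]
          exact Nat.zero_le _
        set j₀ := (Finset.univ.filter (fun j : Fin L => d j.castSucc ≤ m)).max' hmne
          with hj₀def
        have hp1 : d j₀.castSucc ≤ m := by
          have hh := Finset.max'_mem _ hmne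
          simp only [Finset.mem_filter, Finset.mem_univ, true_and] at hh
          exact hh
        have hp2 : m + 1 ≤ d j₀.succ := by
          rcases Nat.lt_or_ge (j₀.val + 1) L with hlt | hge
          · by_contra hcon
            push_neg at hcon
            have hmem : (⟨j₀.val + 1, hlt⟩ : Fin L) ∈
                Finset.univ.filter (fun j : Fin L => d j.castSucc ≤ m) := by
              simp only [Finset.mem_filter, Finset.mem_univ, true_and]
              have hcs : (⟨j₀.val + 1, hlt⟩ : Fin L).castSucc = j₀.succ := by
                apply Fin.ext; simp
              rw [hcs]
              omega
            have hle := Finset.le_max' _ _ hmem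
            rw [← hj₀def] at hle
            have hle' : j₀.val + 1 ≤ j₀.val := hle
            omega
          · have hsucc : j₀.succ = Fin.last L := by
              apply Fin.ext
              simp [Fin.val_succ]
              have := j₀.isLt
              omega
            rw [hsucc, hdL]
            have h1 := u.isLt
            have h2 := v.isLt
            omega
        exact ⟨j₀, by omega, by omega, by omega, by omega⟩
      have hT0 : ∀ w ∈ T, s w ≠ j₀ := by
        intro w hw hsw
        rcases hT w hw with ⟨hwe, hwi⟩ | ⟨hwe, hwi⟩
        · have heq := hinj j₀ u w hj₀u1 (le_of_lt hwi)
            (by rw [← hsw]; exact hs1 w) hwe.symm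
          exact absurd (congrArg Fin.val heq) (by omega)
        · have heq := hinj j₀ w v (by rw [← hsw]; exact hs2 w) (le_of_lt hwi)
            hj₀v2 hwe
          exact absurd (congrArg Fin.val heq) (by omega)
      have hinjT : Set.InjOn s ((T : Finset (Fin n)) : Set (Fin n)) := by
        intro x hx y hy hxy
        have hx' := Finset.mem_coe.mp hx
        have hy' := Finset.mem_coe.mp hy
        rcases hT x hx' with ⟨hxe, hxi⟩ | ⟨hxe, hxi⟩ <;>
          rcases hT y hy' with ⟨hye, hyi⟩ | ⟨hye, hyi⟩
        · rcases le_total x.val y.val with hle | hle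
          · exact hinj (s x) x y (hs2 x) hle (by rw [hxy]; exact hs1 y)
              (hxe.trans hye.symm)
          · exact (hinj (s y) y x (hs2 y) hle (by rw [← hxy]; exact hs1 x)
              (hye.trans hxe.symm)).symm
        · -- x at level h u with u < x ; y at level h v with y < v : impossible
          exfalso
          have hvx : v.val ≤ x.val := by omega
          have heq := hinj (s y) y v (hs2 y) (le_of_lt hyi)
            (by have h1 := hs1 x; rw [hxy] at h1; omega) hye
          exact absurd (congrArg Fin.val heq) (by omega)
        · exfalso
          have hvy : v.val ≤ y.val := by omega
          have heq := hinj (s x) x v (hs2 x) (le_of_lt hxi)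
            (by have h1 := hs1 y; rw [← hxy] at h1; omega) hxe
          exact absurd (congrArg Fin.val heq) (by omega)
        · rcases le_total x.val y.val with hle | hle
          · exact hinj (s x) x y (hs2 x) hle (by rw [hxy]; exact hs1 y)
              (hxe.trans hye.symm)
          · exact (hinj (s y) y x (hs2 y) hle (by rw [← hxy]; exact hs1 x)
              (hye.trans hxe.symm)).symm
      have hcard2 : T.card ≤ (Finset.univ.erase j₀).card :=
        Finset.card_le_card_of_injOn s
          (fun w hw => Finset.mem_erase.mpr ⟨hT0 w hw, Finset.mem_univ _⟩) hinjT
      rw [Finset.card_erase_of_mem (Finset.mem_univ _), Finset.card_univ,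
        Fintype.card_fin] at hcard2
      omega
    rcases hAdj with hp | ha | ha
    · exact hpathCase hp
    · exact harcCase (hP2 (u, v) ha)
    · exact harcCase (hP2 (v, u) ha).symm
  -- assemble
  apply Nat.sInf_le
  refine ⟨e.trans (finCongr (Fintype.card_fin n).symm), ?_⟩
  intro u v hAdj
  have hne : u ≠ v := SimpleGraph.Adj.ne hAdj
  have hfne : f u ≠ f v := fun hh => hne (hfinj hh)
  simp only [Equiv.trans_apply, finCongr_apply, Fin.coe_cast]
  rcases Ne.lt_or_gt hfne with hlt | hlt
  · have hev : e u < e v := (he u v).mpr hlt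
    have hct := hcount u v hev
    have hk := key u v hAdj hlt
    have h1 : (e u).val < (e v).val := hev
    omega
  · have hev : e v < e u := (he v u).mpr hlt
    have hct := hcount v u hev
    have hk := key v u hAdj.symm hlt
    have h1 : (e v).val < (e u).val := hev
    omega
end

section
/- Coding gain is at most 2 with one redundant chunk: For any graph G and any t ≥ 2, S^u_t(G, n+1) ≤ 2 · S^c_t(G, n+1), i.e., the best uncoded store with one redundant chunk has stretch metric at most twice that of the best (linearly) coded store with one redundant chunk. -/
/-- The chunks indexed by `S` are recoverable from the interval `[a, b]` of the
linearly coded store `c` (user chunk `u` is the basis vector `Pi.single u 1`). -/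
def SpanRecovers {n : ℕ} (c : ℕ → (Fin n → ZMod 2)) (S : Set (Fin n))
    (a b : ℕ) : Prop :=
  ∀ u ∈ S, (Pi.single u 1 : Fin n → ZMod 2) ∈
    Submodule.span (ZMod 2) {w : Fin n → ZMod 2 | ∃ j : ℕ, a ≤ j ∧ j ≤ b ∧ w = c j}

/-- Stretch number of a file with vertex set `S` and `ℓ` chunks in a linearly
coded store `c` of length `m`. -/
noncomputable def MinScoded {n : ℕ} (m : ℕ) (c : ℕ → (Fin n → ZMod 2))
    (S : Set (Fin n)) (ℓ : ℕ) : ℝ :=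
  sInf {r : ℝ | ∃ a b : ℕ, a ≤ b ∧ b < m ∧ SpanRecovers c S a b ∧
    r = ((b : ℝ) - (a : ℝ) + 1) / (ℓ : ℝ)}

/-- The coded stretch metric `S^c_t(G, m)` over linearly coded stores of length
`m` from which every file (simple path with at most `t` vertices) is
recoverable. -/
noncomputable def Sc {n : ℕ} (G : SimpleGraph (Fin n)) (t m : ℕ) : ℝ :=
  sInf {r : ℝ | ∃ c : ℕ → (Fin n → ZMod 2),
    (∀ (u v : Fin n) (p : G.Walk u v), p.IsPath → p.length + 1 ≤ t →
      ∃ a b : ℕ, a ≤ b ∧ b < m ∧ SpanRecovers c {x | x ∈ p.support} a b) ∧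
    r = sSup {s : ℝ | ∃ (u v : Fin n) (p : G.Walk u v), p.IsPath ∧
      p.length + 1 ≤ t ∧ s = MinScoded m c {x | x ∈ p.support} (p.length + 1)}}

/-- Stretch number of a file with vertex set `S` and `ℓ` chunks in an uncoded
store `s` of length `m`: the minimal covering interval length divided by `ℓ`. -/
noncomputable def MinSunc {n : ℕ} (m : ℕ) (s : ℕ → Fin n) (S : Set (Fin n))
    (ℓ : ℕ) : ℝ :=
  sInf {r : ℝ | ∃ a b : ℕ, a ≤ b ∧ b < m ∧
    (∀ u ∈ S, ∃ j : ℕ, a ≤ j ∧ j ≤ b ∧ s j = u) ∧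
    r = ((b : ℝ) - (a : ℝ) + 1) / (ℓ : ℝ)}

/-- The uncoded stretch metric `S^u_t(G, m)` over stores of length `m` that
contain every chunk at least once (within positions `0, …, m−1`). -/
noncomputable def Su {n : ℕ} (G : SimpleGraph (Fin n)) (t m : ℕ) : ℝ :=
  sInf {r : ℝ | ∃ s : ℕ → Fin n, (∀ v : Fin n, ∃ j : ℕ, j < m ∧ s j = v) ∧
    r = sSup {x : ℝ | ∃ (u v : Fin n) (p : G.Walk u v), p.IsPath ∧
      p.length + 1 ≤ t ∧ x = MinSunc m s {y | y ∈ p.support} (p.length + 1)}}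

/-!
The `n + 1` coded chunks span the `n`-dimensional data space, so their linear relations form a
line `{0, δ}`: every data chunk `u` has exactly two decodings, a shorter one `X u` and `X u + δ`,
and an interval recovers `u` iff it contains the support of one of them. The `X u` together with
one extra vector `X s₀ + δ` are linearly independent, so by Hall's theorem their supports have
distinct representatives; storing `u` at the representative of `X u` (and `s₀` once more at that
of `X s₀ + δ`) gives the uncoded store. An interval recovering `u` only through `X u + δ` sees
the copy of `u` within one interval length of itself, except for at most one chunk `s₀`, whose
two decodings split the support of `δ` at its midpoint. Since `X u` is the shorter decoding, all
these overshoots lie on the same side, so doubling the interval on that side covers every chunk.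
-/

open Finset Submodule Module Function

theorem Finsupp.support_add_eq_symmDiff_of_zmod_two {α : Type*} [DecidableEq α]
    (x y : α →₀ ZMod 2) : (x + y).support = symmDiff x.support y.support := by
  ext j
  simp only [Finsupp.mem_support_iff, Finset.mem_symmDiff, Finsupp.add_apply]
  generalize x j = a
  generalize y j = b
  revert a b
  decide

theorem Finsupp.eq_of_support_eq_of_zmod_two {α : Type*} {x y : α →₀ ZMod 2}
    (h : x.support = y.support) : x = y := by
  ext j
  have hj : x j ≠ 0 ↔ y j ≠ 0 := by simp only [← Finsupp.mem_support_iff, h]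
  generalize x j = a at hj
  generalize y j = b at hj
  revert a b
  decide

theorem LinearMap.exists_eq_iff_eq_or_eq_add {M N : Type*} [AddCommGroup M]
    [Module (ZMod 2) M] [FiniteDimensional (ZMod 2) M] [AddCommGroup N] [Module (ZMod 2) N]
    (f : M →ₗ[ZMod 2] N) (hf : Surjective f)
    (hdim : finrank (ZMod 2) M = finrank (ZMod 2) N + 1) :
    ∃ δ ≠ 0, ∀ x y, f x = f y ↔ x = y ∨ x = y + δ := by
  have hker : finrank (ZMod 2) (ker f) = 1 := by
    have := f.finrank_range_add_finrank_ker
    rw [range_eq_top.mpr hf, finrank_top] at this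
    omega
  obtain ⟨δ, hδ, hspan⟩ := finrank_eq_one_iff'.mp hker
  refine ⟨δ, fun h => hδ (Subtype.ext h), fun x y => ?_⟩
  rw [← sub_eq_zero, ← map_sub, ← sub_eq_zero (a := x), ← sub_eq_iff_eq_add']
  refine ⟨fun h => ?_, by rintro (h | h) <;> simp [h]⟩
  obtain ⟨a, ha⟩ := hspan ⟨x - y, h⟩
  have hxy : x - y = a • (δ : M) := (congrArg Subtype.val ha).symm
  rcases (by decide : ∀ a : ZMod 2, a = 0 ∨ a = 1) a with rfl | rfl <;> simp [hxy]

/-- Hall's condition holds because `#s` independent vectors supported on a set `T` force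
`#s ≤ #T`. -/
theorem LinearIndependent.exists_injective_mem_support {ι α K : Type*} [Field K]
    [DecidableEq α] {w : ι → α →₀ K} (hw : LinearIndependent K w) :
    ∃ f : ι → α, Injective f ∧ ∀ i, f i ∈ (w i).support := by
  refine (all_card_le_biUnion_card_iff_exists_injective _).mp fun s => ?_
  set T := s.biUnion fun i => (w i).support
  have : Module.Finite K (Finsupp.supported K K (T : Set α)) :=
    Module.Finite.equiv (Finsupp.supportedEquivFinsupp _).symm
  calc #s = finrank K (span K (Set.range (w ∘ ((↑) : s → ι)))) := by
        rw [finrank_span_eq_card (hw.comp _ Subtype.val_injective), Fintype.card_coe]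
    _ ≤ finrank K (Finsupp.supported K K (T : Set α)) := by
        refine Submodule.finrank_mono (span_le.mpr ?_)
        rintro _ ⟨i, rfl⟩
        exact (Finsupp.mem_supported _ _).mpr
          (coe_subset.mpr (subset_biUnion_of_mem (fun i => (w i).support) i.2))
    _ = #T := by
        rw [(Finsupp.supportedEquivFinsupp _).finrank_eq, finrank_finsupp_self]
        simp

theorem Finsupp.mem_span_interval_iff {R M : Type*} [Semiring R] [AddCommMonoid M]
    [Module R M] {c : ℕ → M} {a b : ℕ} {x : M} :
    x ∈ span R {w | ∃ j, a ≤ j ∧ j ≤ b ∧ w = c j} ↔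
      ∃ y : ℕ →₀ R, y.support ⊆ Icc a b ∧ Finsupp.linearCombination R c y = x := by
  have : {w | ∃ j, a ≤ j ∧ j ≤ b ∧ w = c j} = c '' Set.Icc a b := by
    ext
    simp [eq_comm, and_assoc]
  rw [this, Finsupp.mem_span_image_iff_linearCombination]
  simp [Finsupp.mem_supported, ← coe_Icc]

namespace CodingGain

section Hull

-- Hull endpoints; both are `0` for `∅`.
noncomputable def lo (s : Finset ℕ) : ℕ := sInf (s : Set ℕ)

noncomputable def hi (s : Finset ℕ) : ℕ := sSup (s : Set ℕ)

variable {s t A B : Finset ℕ} {a b j k : ℕ}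

theorem lo_le (h : j ∈ s) : lo s ≤ j := Nat.sInf_le h

theorem le_hi (h : j ∈ s) : j ≤ hi s := le_csSup s.bddAbove h

theorem lo_mem (h : s.Nonempty) : lo s ∈ s := Nat.sInf_mem (coe_nonempty.mpr h)

theorem hi_mem (h : s.Nonempty) : hi s ∈ s := Nat.sSup_mem (coe_nonempty.mpr h) s.bddAbove

theorem lo_le_hi (h : s.Nonempty) : lo s ≤ hi s := lo_le (hi_mem h)

theorem le_lo_and_hi_le (h : s.Nonempty) (hs : s ⊆ Icc a b) : a ≤ lo s ∧ hi s ≤ b :=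
  ⟨(mem_Icc.mp (hs (lo_mem h))).1, (mem_Icc.mp (hs (hi_mem h))).2⟩

theorem lo_union (hs : s.Nonempty) (ht : t.Nonempty) : lo (s ∪ t) = min (lo s) (lo t) := by
  simp only [lo, coe_union]
  exact csInf_union s.bddBelow (coe_nonempty.mpr hs) t.bddBelow (coe_nonempty.mpr ht)

theorem hi_union (hs : s.Nonempty) (ht : t.Nonempty) : hi (s ∪ t) = max (hi s) (hi t) := by
  simp only [hi, coe_union]
  exact csSup_union s.bddAbove (coe_nonempty.mpr hs) t.bddAbove (coe_nonempty.mpr ht)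

theorem disjoint_of_hi_lt_lo (h : hi s < lo t) : Disjoint s t :=
  disjoint_left.mpr fun _ hs ht => by have := le_hi hs; have := lo_le ht; omega

/-- Some point of `A` is farther from the hull `[lo B, hi B]` of `B` than its length
`hi B - lo B + 1`. -/
def Far (A B : Finset ℕ) : Prop :=
  ∃ j ∈ A, j + hi B + 1 < 2 * lo B ∨ 2 * hi B + 1 < j + lo B

noncomputable def lowerHalf (D : Finset ℕ) : Finset ℕ :=
  D.filter fun j => 2 * j < lo D + hi D

theorem lowerHalf_union (hs : s.Nonempty) (ht : t.Nonempty) (hst : hi s < lo t)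
    (h₁ : 2 * hi s < lo s + hi t) (h₂ : lo s + hi t ≤ 2 * lo t) : lowerHalf (s ∪ t) = s := by
  have := lo_le_hi hs
  have := lo_le_hi ht
  ext j
  simp only [lowerHalf, mem_filter, mem_union, lo_union hs ht, hi_union hs ht]
  constructor
  · rintro ⟨hj | hj, hmid⟩
    · exact hj
    · have := lo_le hj
      omega
  · intro hj
    have := le_hi hj
    exact ⟨Or.inl hj, by omega⟩

/-- A far pair has disjoint hulls, and the gap between them contains the midpoint of the hull
of `symmDiff A B = A ∪ B`. -/
theorem eq_lowerHalf_of_far (hA : A.Nonempty) (hB : B.Nonempty)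
    (hAB : hi A - lo A ≤ hi B - lo B) (hfar : Far A B) :
    A = lowerHalf (symmDiff A B) ∨ B = lowerHalf (symmDiff A B) := by
  obtain ⟨j, hj, hj'⟩ := hfar
  have := lo_le hj
  have := le_hi hj
  have := lo_le_hi hA
  have := lo_le_hi hB
  rcases (by omega : hi A < lo B ∨ hi B < lo A) with h | h
  · rw [(disjoint_of_hi_lt_lo h).symmDiff_eq_sup, sup_eq_union,
      lowerHalf_union hA hB h (by omega) (by omega)]
    exact Or.inl rfl
  · rw [symmDiff_comm, (disjoint_of_hi_lt_lo h).symmDiff_eq_sup, sup_eq_union,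
      lowerHalf_union hB hA h (by omega) (by omega)]
    exact Or.inr rfl

theorem mem_window_of_not_far (hB : B.Nonempty) (hBab : B ⊆ Icc a b) (hfar : ¬ Far A B)
    (hj : j ∈ A) : a + a ≤ j + b + 1 ∧ j + a ≤ 2 * b + 1 := by
  obtain ⟨hlo, hhi⟩ := le_lo_and_hi_le hB hBab
  by_contra h
  exact hfar ⟨j, hj, by omega⟩

/-- `j` lies in `symmDiff A B = symmDiff A' B'` but not in `B'`, so in `A'`; if `A'` also reached
past `b`, it would be longer than `B' ⊆ [a, b]`. -/
theorem le_right_of_lt_left {A' B' : Finset ℕ} (hD : symmDiff A B = symmDiff A' B')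
    (hB : B ⊆ Icc a b) (hB'ne : B'.Nonempty) (hB' : B' ⊆ Icc a b)
    (hdiam : hi A' - lo A' ≤ hi B' - lo B') (hj : j ∈ A) (hja : j < a) (hk : k ∈ A') :
    k ≤ b := by
  have hjD : j ∈ symmDiff A' B' := by
    rw [← hD, mem_symmDiff]
    exact Or.inl ⟨hj, fun h => by have := (mem_Icc.mp (hB h)).1; omega⟩
  have hjA' : j ∈ A' := by
    rcases mem_symmDiff.mp hjD with h | ⟨h, -⟩
    · exact h.1
    · have := (mem_Icc.mp (hB' h)).1; omega
  obtain ⟨hlo, hhi⟩ := le_lo_and_hi_le hB'ne hB'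
  have := lo_le hjA'
  have := le_hi hk
  have := lo_le_hi hB'ne
  omega

/-- `A u` and `B u` stand for the supports of the two decodings of chunk `u`; the uncoded store
holds `u` at position `pos (some u)` and a second copy of `s₀` at `pos none`. -/
theorem exists_window {ι : Type*} {D : Finset ℕ} {A B : ι → Finset ℕ} {s₀ : ι}
    {pos : Option ι → ℕ} {n : ℕ} (hD : ∀ u, symmDiff (A u) (B u) = D)
    (hB : ∀ u, (B u).Nonempty) (hdiam : ∀ u, hi (A u) - lo (A u) ≤ hi (B u) - lo (B u))
    (hfar : ∀ u, Far (A u) (B u) → u = s₀) (hpos : ∀ u, pos (some u) ∈ A u)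
    (hpos₀ : pos none ∈ B s₀) (hposn : ∀ o, pos o ≤ n) (hab : a ≤ b) (hbn : b ≤ n) :
    ∃ a' b', a' ≤ b' ∧ b' ≤ n ∧ b' + 1 + 2 * a ≤ 2 * (b + 1) + a' ∧
      ∀ u, (A u ⊆ Icc a b ∨ B u ⊆ Icc a b) → ∃ o, pos o ∈ Icc a' b' ∧ o.getD s₀ = u := by
  have hplace : ∀ u, (A u ⊆ Icc a b ∨ B u ⊆ Icc a b) →
      (∃ o, pos o ∈ Icc a b ∧ o.getD s₀ = u) ∨ (B u ⊆ Icc a b ∧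
        a + a ≤ pos (some u) + b + 1 ∧ pos (some u) + a ≤ 2 * b + 1) := by
    rintro u (hA | hBu)
    · exact Or.inl ⟨some u, hA (hpos u), rfl⟩
    · by_cases hu : u = s₀
      · subst hu
        exact Or.inl ⟨none, hBu hpos₀, rfl⟩
      · exact Or.inr ⟨hBu, mem_window_of_not_far (hB u) hBu (fun h => hu (hfar u h)) (hpos u)⟩
  by_cases hright : ∃ v, B v ⊆ Icc a b ∧ b < pos (some v)
  · obtain ⟨v, hBv, hv⟩ := hright
    refine ⟨a, min (2 * b + 1 - a) n, by omega, min_le_right _ _, by omega, fun u hu => ?_⟩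
    rcases hplace u hu with ⟨o, ho, rfl⟩ | ⟨hBu, hwin⟩
    · refine ⟨o, ?_, rfl⟩
      rw [mem_Icc] at ho ⊢
      omega
    · have := hposn (some u)
      have : a ≤ pos (some u) := not_lt.mp fun h => hv.not_ge <| le_right_of_lt_left
        ((hD u).trans (hD v).symm) hBu (hB v) hBv (hdiam v) (hpos u) h (hpos v)
      exact ⟨some u, mem_Icc.mpr (by omega), rfl⟩
  · push Not at hright
    refine ⟨a - (b + 1 - a), b, by omega, hbn, by omega, fun u hu => ?_⟩
    rcases hplace u hu with ⟨o, ho, rfl⟩ | ⟨hBu, hwin⟩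
    · refine ⟨o, ?_, rfl⟩
      rw [mem_Icc] at ho ⊢
      omega
    · have := hright u hBu
      exact ⟨some u, mem_Icc.mpr (by omega), rfl⟩

end Hull

section Store

open Finsupp (linearCombination supported)

variable {n : ℕ} {c : ℕ → (Fin n → ZMod 2)}

theorem exists_kernel_vector (hc : ∀ u : Fin n, ∃ y : ℕ →₀ ZMod 2,
      y.support ⊆ Iic n ∧ linearCombination (ZMod 2) c y = Pi.single u 1) :
    ∃ δ : ℕ →₀ ZMod 2, δ ≠ 0 ∧ δ.support ⊆ Iic n ∧ linearCombination (ZMod 2) c δ = 0 ∧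
      ∀ y y' : ℕ →₀ ZMod 2, y.support ⊆ Iic n → y'.support ⊆ Iic n →
        linearCombination (ZMod 2) c y = linearCombination (ZMod 2) c y' →
          y = y' ∨ y = y' + δ := by
  set W := supported (ZMod 2) (ZMod 2) (↑(Iic n) : Set ℕ)
  have hW : ∀ y, y ∈ W ↔ y.support ⊆ Iic n := fun y => by
    rw [Finsupp.mem_supported, coe_subset]
  have : FiniteDimensional (ZMod 2) W :=
    Module.Finite.equiv (Finsupp.supportedEquivFinsupp _).symm
  set f := (linearCombination (ZMod 2) c).domRestrict W
  have hf : Surjective f := by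
    rw [← LinearMap.range_eq_top, eq_top_iff, ← (Pi.basisFun (ZMod 2) (Fin n)).span_eq,
      span_le]
    rintro _ ⟨u, rfl⟩
    obtain ⟨y, hy, hyc⟩ := hc u
    exact ⟨⟨y, (hW y).mpr hy⟩, by simpa [f] using hyc⟩
  have hdim : finrank (ZMod 2) W = finrank (ZMod 2) (Fin n → ZMod 2) + 1 := by
    rw [(Finsupp.supportedEquivFinsupp _).finrank_eq, finrank_finsupp_self, finrank_fin_fun]
    simp
  obtain ⟨δ, hδ, hfib⟩ := f.exists_eq_iff_eq_or_eq_add hf hdim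
  refine ⟨δ, fun h => hδ (Subtype.ext h), (hW δ).mp δ.2, ?_, fun y y' hy hy' h => ?_⟩
  · simpa [f] using (hfib δ 0).mpr (Or.inr (zero_add δ).symm)
  · simpa [f, Subtype.ext_iff] using (hfib ⟨y, (hW y).mpr hy⟩ ⟨y', (hW y').mpr hy'⟩).mp h

theorem support_nonempty_of_linearCombination_eq_single {x : ℕ →₀ ZMod 2} {u : Fin n}
    (h : linearCombination (ZMod 2) c x = Pi.single u 1) : x.support.Nonempty :=
  Finsupp.support_nonempty_iff.mpr fun hx => by simpa [hx] using congrFun h u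

theorem exists_decodings_hull_le {δ : ℕ →₀ ZMod 2} (hδ : δ.support ⊆ Iic n)
    (hcδ : linearCombination (ZMod 2) c δ = 0) (hc : ∀ u : Fin n, ∃ y : ℕ →₀ ZMod 2,
      y.support ⊆ Iic n ∧ linearCombination (ZMod 2) c y = Pi.single u 1) :
    ∃ X : Fin n → ℕ →₀ ZMod 2, ∀ u, (X u).support ⊆ Iic n ∧
      linearCombination (ZMod 2) c (X u) = Pi.single u 1 ∧
      hi (X u).support - lo (X u).support ≤ hi (X u + δ).support - lo (X u + δ).support := by
  choose y hy hyc using hc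
  refine ⟨fun u => if hi (y u).support - lo (y u).support ≤
      hi (y u + δ).support - lo (y u + δ).support then y u else y u + δ, fun u => ?_⟩
  dsimp only
  split_ifs with h
  · exact ⟨hy u, hyc u, h⟩
  · refine ⟨Finsupp.support_add.trans (union_subset (hy u) hδ), by simp [hyc u, hcδ], ?_⟩
    rw [add_assoc, ZModModule.add_self, add_zero]
    exact (not_le.mp h).le

/-- Two far chunks would both have a decoding supported on `lowerHalf δ.support`; over `ZMod 2`
the support determines the vector, hence its decoded chunk. -/
theorem exists_forall_far_imp_eq [NeZero n] {δ : ℕ →₀ ZMod 2} {X : Fin n → ℕ →₀ ZMod 2}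
    (hcδ : linearCombination (ZMod 2) c δ = 0)
    (hX : ∀ u, linearCombination (ZMod 2) c (X u) = Pi.single u 1)
    (hdiam : ∀ u, hi (X u).support - lo (X u).support ≤
      hi (X u + δ).support - lo (X u + δ).support) :
    ∃ s₀, ∀ u, Far (X u).support (X u + δ).support → u = s₀ := by
  have hXδ : ∀ u, linearCombination (ZMod 2) c (X u + δ) = Pi.single u 1 := fun u => by
    simp [hX u, hcδ]
  have hhalf : ∀ u, Far (X u).support (X u + δ).support → ∃ x : ℕ →₀ ZMod 2,
      linearCombination (ZMod 2) c x = Pi.single u 1 ∧ x.support = lowerHalf δ.support := by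
    intro u hu
    have hD : symmDiff (X u).support (X u + δ).support = δ.support := by
      rw [Finsupp.support_add_eq_symmDiff_of_zmod_two, symmDiff_symmDiff_cancel_left]
    rcases eq_lowerHalf_of_far (support_nonempty_of_linearCombination_eq_single (hX u))
      (support_nonempty_of_linearCombination_eq_single (hXδ u)) (hdiam u) hu with h | h
    · exact ⟨X u, hX u, hD ▸ h⟩
    · exact ⟨X u + δ, hXδ u, hD ▸ h⟩
  by_cases hex : ∃ s₀, Far (X s₀).support (X s₀ + δ).support
  · obtain ⟨s₀, hs₀⟩ := hex
    obtain ⟨x₀, hx₀, hx₀s⟩ := hhalf s₀ hs₀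
    refine ⟨s₀, fun u hu => ?_⟩
    obtain ⟨x, hx, hxs⟩ := hhalf u hu
    rw [Finsupp.eq_of_support_eq_of_zmod_two (hxs.trans hx₀s.symm), hx₀] at hx
    simpa [Pi.single_apply, eq_comm] using congrFun hx s₀
  · exact ⟨0, fun u hu => (hex ⟨u, hu⟩).elim⟩

theorem linearIndependent_option_elim {δ : ℕ →₀ ZMod 2} {X : Fin n → ℕ →₀ ZMod 2}
    (hδ : δ ≠ 0) (hcδ : linearCombination (ZMod 2) c δ = 0)
    (hX : ∀ u, linearCombination (ZMod 2) c (X u) = Pi.single u 1) (s₀ : Fin n) :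
    LinearIndependent (ZMod 2) fun o : Option (Fin n) => o.elim (X s₀ + δ) X := by
  have hbasis := (Pi.basisFun (ZMod 2) (Fin n)).linearIndependent
  have hXli : LinearIndependent (ZMod 2) X := by
    refine LinearIndependent.of_comp (linearCombination (ZMod 2) c) ?_
    convert hbasis using 1
    ext1 u
    simp [hX u]
  refine linearIndependent_option.mpr ⟨hXli, fun hmem => hδ ?_⟩
  have hδmem : δ ∈ span (ZMod 2) (Set.range X) := by
    simpa using sub_mem (H := span (ZMod 2) (Set.range X)) hmem (subset_span ⟨s₀, rfl⟩)
  obtain ⟨g, rfl⟩ := (mem_span_range_iff_exists_fun _).mp hδmem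
  have hg : ∀ u, g u = 0 := Fintype.linearIndependent_iff.mp hbasis g <| by
    simpa [map_sum, hX] using hcδ
  simp [hg]

/-- `b' + 1 + 2 * a ≤ 2 * (b + 1) + a'` is `b' - a' + 1 ≤ 2 * (b - a + 1)` without truncated
subtraction. -/
def DoublingCover (m : ℕ) (c : ℕ → (Fin n → ZMod 2)) (s : ℕ → Fin n) : Prop :=
  ∀ a b, a ≤ b → b < m → ∃ a' b', a' ≤ b' ∧ b' < m ∧ b' + 1 + 2 * a ≤ 2 * (b + 1) + a' ∧
    ∀ S, SpanRecovers c S a b → ∀ u ∈ S, ∃ j, a' ≤ j ∧ j ≤ b' ∧ s j = u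

theorem exists_doublingCover [NeZero n] (hc : ∀ u : Fin n, ∃ y : ℕ →₀ ZMod 2,
      y.support ⊆ Iic n ∧ linearCombination (ZMod 2) c y = Pi.single u 1) :
    ∃ s : ℕ → Fin n, (∀ v, ∃ j, j < n + 1 ∧ s j = v) ∧ DoublingCover (n + 1) c s := by
  obtain ⟨δ, hδ, hδn, hcδ, hfib⟩ := exists_kernel_vector hc
  choose X hXn hX hdiam using exists_decodings_hull_le hδn hcδ hc
  obtain ⟨s₀, hs₀⟩ := exists_forall_far_imp_eq hcδ hX hdiam
  obtain ⟨pos, hinj, hpos⟩ :=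
    (linearIndependent_option_elim hδ hcδ hX s₀).exists_injective_mem_support
  have hposn : ∀ o, pos o ≤ n := by
    rintro (_ | u)
    · exact mem_Iic.mp (Finsupp.support_add.trans (union_subset (hXn s₀) hδn) (hpos none))
    · exact mem_Iic.mp (hXn u (hpos (some u)))
  set s : ℕ → Fin n := fun j => (invFun pos j).getD s₀
  have hs : ∀ o, s (pos o) = o.getD s₀ := fun o => by simp only [s, leftInverse_invFun hinj o]
  refine ⟨s, fun v => ⟨pos (some v), Nat.lt_succ_of_le (hposn _), hs _⟩, fun a b hab hb => ?_⟩
  obtain ⟨a', b', hab', hb', hlen, hcov⟩ := exists_window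
    (fun u => by rw [Finsupp.support_add_eq_symmDiff_of_zmod_two, symmDiff_symmDiff_cancel_left])
    (fun u => support_nonempty_of_linearCombination_eq_single (c := c) (u := u)
      (by simp [hX u, hcδ]))
    hdiam hs₀ (fun u => hpos (some u)) (hpos none) hposn hab (Nat.le_of_lt_succ hb)
  refine ⟨a', b', hab', Nat.lt_succ_of_le hb', hlen, fun S hS u hu => ?_⟩
  obtain ⟨y, hy, hyc⟩ := Finsupp.mem_span_interval_iff.mp (hS u hu)
  have hyn : y.support ⊆ Iic n := hy.trans fun j hj =>
    mem_Iic.mpr ((mem_Icc.mp hj).2.trans (Nat.le_of_lt_succ hb))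
  obtain ⟨o, ho, rfl⟩ := hcov u <| by
    rcases hfib y (X u) hyn (hXn u) (hyc.trans (hX u).symm) with rfl | rfl
    exacts [Or.inl hy, Or.inr hy]
  exact ⟨pos o, (mem_Icc.mp ho).1, (mem_Icc.mp ho).2, hs o⟩

theorem exists_solution_of_recovers {G : SimpleGraph (Fin n)} {t : ℕ} (ht : 1 ≤ t)
    (hrec : ∀ (u v : Fin n) (p : G.Walk u v), p.IsPath → p.length + 1 ≤ t →
      ∃ a b : ℕ, a ≤ b ∧ b < n + 1 ∧ SpanRecovers c {x | x ∈ p.support} a b) (u : Fin n) :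
    ∃ y : ℕ →₀ ZMod 2, y.support ⊆ Iic n ∧ linearCombination (ZMod 2) c y = Pi.single u 1 := by
  obtain ⟨a, b, -, hb, hab⟩ := hrec u u .nil .nil (by simpa using ht)
  obtain ⟨y, hy, hyc⟩ := Finsupp.mem_span_interval_iff.mp (hab u (by simp))
  exact ⟨y, hy.trans fun j hj => mem_Iic.mpr (by have := (mem_Icc.mp hj).2; omega), hyc⟩

end Store

section Stretch

variable {n m ℓ : ℕ} {c : ℕ → (Fin n → ZMod 2)} {s : ℕ → Fin n} {S : Set (Fin n)}

theorem ratio_nonneg {a b : ℕ} (ℓ : ℕ) (hab : a ≤ b) : 0 ≤ ((b : ℝ) - a + 1) / ℓ := by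
  have : (a : ℝ) ≤ b := by exact_mod_cast hab
  exact div_nonneg (by linarith) (Nat.cast_nonneg ℓ)

theorem minSunc_nonneg : 0 ≤ MinSunc m s S ℓ :=
  Real.sInf_nonneg fun _ ⟨_, _, hab, _, _, hr⟩ => hr ▸ ratio_nonneg ℓ hab

theorem minScoded_nonneg : 0 ≤ MinScoded m c S ℓ :=
  Real.sInf_nonneg fun _ ⟨_, _, hab, _, _, hr⟩ => hr ▸ ratio_nonneg ℓ hab

theorem minScoded_le : MinScoded m c S ℓ ≤ m := by
  rcases Set.eq_empty_or_nonempty {r : ℝ | ∃ a b : ℕ, a ≤ b ∧ b < m ∧ SpanRecovers c S a b ∧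
      r = ((b : ℝ) - (a : ℝ) + 1) / (ℓ : ℝ)} with h | ⟨_, a, b, hab, hbm, hrec, rfl⟩
  · rw [MinScoded, h, Real.sInf_empty]
    positivity
  have hba : (a : ℝ) ≤ b := by exact_mod_cast hab
  have hbm' : (b : ℝ) + 1 ≤ m := by exact_mod_cast hbm
  calc MinScoded m c S ℓ ≤ ((b : ℝ) - a + 1) / ℓ :=
        csInf_le ⟨0, fun _ ⟨_, _, h, _, _, hr⟩ => hr ▸ ratio_nonneg ℓ h⟩
          ⟨a, b, hab, hbm, hrec, rfl⟩
    _ ≤ (b : ℝ) - a + 1 := by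
        rcases ℓ.eq_zero_or_pos with rfl | hℓ
        · simp only [Nat.cast_zero, div_zero]
          linarith
        · exact div_le_self (by linarith) (by exact_mod_cast hℓ)
    _ ≤ m := by linarith [(Nat.cast_nonneg a : (0 : ℝ) ≤ a)]

theorem minSunc_le_two_mul_minScoded (hcs : DoublingCover m c s)
    (hS : ∃ a b, a ≤ b ∧ b < m ∧ SpanRecovers c S a b) :
    MinSunc m s S ℓ ≤ 2 * MinScoded m c S ℓ := by
  obtain ⟨a, b, hab, hbm, hrec⟩ := hS
  rw [← div_le_iff₀' two_pos]
  refine le_csInf ⟨_, a, b, hab, hbm, hrec, rfl⟩ ?_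
  rintro _ ⟨a, b, hab, hbm, hrec, rfl⟩
  obtain ⟨a', b', hab', hb'm, hlen, hcov⟩ := hcs a b hab hbm
  have hlen' : ((b' + 1 + 2 * a : ℕ) : ℝ) ≤ (2 * (b + 1) + a' : ℕ) := by exact_mod_cast hlen
  push_cast at hlen'
  rw [div_le_iff₀' two_pos]
  calc MinSunc m s S ℓ ≤ ((b' : ℝ) - a' + 1) / ℓ :=
        csInf_le ⟨0, fun _ ⟨_, _, h, _, _, hr⟩ => hr ▸ ratio_nonneg ℓ h⟩
          ⟨a', b', hab', hb'm, hcov S hrec, rfl⟩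
    _ ≤ 2 * (((b : ℝ) - a + 1) / ℓ) := by
        rw [← mul_div_assoc]
        gcongr
        linarith

variable {G : SimpleGraph (Fin n)} {t : ℕ}

theorem Su_le_sSup (hs : ∀ v, ∃ j, j < m ∧ s j = v) :
    Su G t m ≤ sSup {x : ℝ | ∃ (u v : Fin n) (p : G.Walk u v), p.IsPath ∧
      p.length + 1 ≤ t ∧ x = MinSunc m s {y | y ∈ p.support} (p.length + 1)} :=
  csInf_le ⟨0, fun _ ⟨_, _, hr⟩ => hr ▸ Real.sSup_nonneg fun _ ⟨_, _, _, _, _, hx⟩ =>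
    hx ▸ minSunc_nonneg⟩ ⟨s, hs, rfl⟩

theorem sSup_minSunc_le_two_mul (hcs : DoublingCover m c s) (v₀ : Fin n) (ht : 1 ≤ t)
    (hrec : ∀ (u v : Fin n) (p : G.Walk u v), p.IsPath → p.length + 1 ≤ t →
      ∃ a b : ℕ, a ≤ b ∧ b < m ∧ SpanRecovers c {x | x ∈ p.support} a b) :
    sSup {x : ℝ | ∃ (u v : Fin n) (p : G.Walk u v), p.IsPath ∧
        p.length + 1 ≤ t ∧ x = MinSunc m s {y | y ∈ p.support} (p.length + 1)} ≤
      2 * sSup {x : ℝ | ∃ (u v : Fin n) (p : G.Walk u v), p.IsPath ∧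
        p.length + 1 ≤ t ∧ x = MinScoded m c {y | y ∈ p.support} (p.length + 1)} := by
  have hbdd : BddAbove {x : ℝ | ∃ (u v : Fin n) (p : G.Walk u v), p.IsPath ∧
      p.length + 1 ≤ t ∧ x = MinScoded m c {y | y ∈ p.support} (p.length + 1)} :=
    ⟨m, fun _ ⟨_, _, _, _, _, hx⟩ => hx ▸ minScoded_le⟩
  refine csSup_le ⟨_, v₀, v₀, .nil, .nil, by simpa using ht, rfl⟩ ?_
  rintro _ ⟨u, v, p, hp, hpt, rfl⟩
  calc MinSunc m s {y | y ∈ p.support} (p.length + 1)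
      ≤ 2 * MinScoded m c {y | y ∈ p.support} (p.length + 1) :=
        minSunc_le_two_mul_minScoded hcs (hrec u v p hp hpt)
    _ ≤ _ := by
        gcongr
        exact le_csSup hbdd ⟨u, v, p, hp, hpt, rfl⟩

theorem Su_eq_zero (G : SimpleGraph (Fin 0)) (t m : ℕ) : Su G t m = 0 := by
  rw [Su, ← Real.sInf_empty]
  congr
  exact Set.eq_empty_of_forall_notMem fun _ ⟨s, _⟩ => (s 0).elim0

theorem Sc_nonneg : 0 ≤ Sc G t m :=
  Real.sInf_nonneg fun _ ⟨_, _, hr⟩ => hr ▸ Real.sSup_nonneg fun _ ⟨_, _, _, _, _, hx⟩ =>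
    hx ▸ minScoded_nonneg

theorem spanRecovers_standardStore (S : Set (Fin n)) :
    SpanRecovers (fun j => if h : j < n then Pi.single (⟨j, h⟩ : Fin n) 1 else 0) S 0 (n - 1) :=
  fun u _ => subset_span ⟨u, Nat.zero_le _, by omega, by simp⟩

end Stretch

end CodingGain

open CodingGain

/-- Coding gain is at most 2 with one redundant chunk:
`S^u_t(G, n+1) ≤ 2 · S^c_t(G, n+1)`. -/
theorem coding_gain_le_two {n t : ℕ} (G : SimpleGraph (Fin n)) (ht : 2 ≤ t) :
    Su G t (n + 1) ≤ 2 * Sc G t (n + 1) := by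
  rcases n.eq_zero_or_pos with rfl | hn
  · rw [Su_eq_zero]
    exact mul_nonneg zero_le_two Sc_nonneg
  have : NeZero n := ⟨hn.ne'⟩
  rw [Sc, ← div_le_iff₀' two_pos]
  refine le_csInf ⟨_, _, fun _ _ _ _ _ => ⟨0, n - 1, Nat.zero_le _, by omega,
    spanRecovers_standardStore _⟩, rfl⟩ ?_
  rintro _ ⟨c, hrec, rfl⟩
  rw [div_le_iff₀' two_pos]
  obtain ⟨s, hs, hcs⟩ := exists_doublingCover (exists_solution_of_recovers (by omega) hrec)
  exact (Su_le_sSup hs).trans (sSup_minSunc_le_two_mul hcs 0 (by omega) hrec)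
end

section
/- In Example 1's graph (V = {v_1,...,v_{8N}} ∪ {a, b}, line edges {v_i, v_{i+1}} for i ∈ [8N−1], edges {a, v_i} for all i ∈ [6N], edges {b, v_i} for all i ∈ {2N+1,...,8N}, and edge {a,b}), any uncoded chunk store of length n+1 = 8N+3 (a sequence over V containing each vertex, with exactly one repetition) contains an edge {u,w} of the graph such that every interval covering both an occurrence of u and an occurrence of w has length at least 3N+2. Hence S^u_2(G, n+1) ≥ (3N+2)/2. -/
/-- Example 1's graph: vertices `v_1, …, v_{8N}` (here indices `0, …, 8N−1`),
`a` (index `8N`) and `b` (index `8N+1`); line edges `{v_i, v_{i+1}}`, edges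
`{a, v_i}` for `i ≤ 6N`, edges `{b, v_i}` for `2N < i ≤ 8N`, and the edge
`{a, b}`. -/
def exampleGraph (N : ℕ) : SimpleGraph (Fin (8 * N + 2)) :=
  SimpleGraph.fromRel (fun u w =>
    (u.val + 1 = w.val ∧ w.val < 8 * N) ∨
    (u.val = 8 * N ∧ w.val < 6 * N) ∨
    (u.val = 8 * N + 1 ∧ 2 * N ≤ w.val ∧ w.val < 8 * N) ∨
    (u.val = 8 * N ∧ w.val = 8 * N + 1))

/-- Minimal covering interval length of an edge `{u, w}` in the store `s`. -/
noncomputable def coverLen {n m : ℕ} (s : Fin m → Fin n) (u w : Fin n) : ℕ :=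
  sInf {ℓ : ℕ | ∃ i j : Fin m, s i = u ∧ s j = w ∧
    ℓ = ((i.val : ℤ) - (j.val : ℤ)).natAbs + 1}

/-- The uncoded stretch metric for `t = 2` over surjective stores of length `m`. -/
noncomputable def Su2 {n : ℕ} (G : SimpleGraph (Fin n)) (m : ℕ) : ℝ :=
  sInf {r : ℝ | ∃ s : Fin m → Fin n, Function.Surjective s ∧
    r = sSup {x : ℝ | ∃ u w : Fin n, G.Adj u w ∧ x = ((coverLen s u w : ℕ) : ℝ) / 2}}

/-! A store of length `n + 1` onto `n` vertices repeats at most one vertex, so one of `a`, `b`,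
call it `c`, occurs exactly once, say at position `p`. Distinct vertices occupy distinct
positions and only `6N` positions other than `p` lie within distance `3N` of it, so one of the
`6N + 1` neighbours of `c` occurs only farther than `3N` from `p`, and every interval covering
that edge has length at least `3N + 2`. -/

open Finset

theorem subsingleton_fiber_or_of_card_le_succ {α β : Type*} [Fintype α] [Fintype β]
    [DecidableEq β] {s : α → β} (hs : Function.Surjective s)
    (hcard : Fintype.card α ≤ Fintype.card β + 1) {x y : β} (hxy : x ≠ y) :
    (∀ i j, s i = x → s j = x → i = j) ∨ (∀ i j, s i = y → s j = y → i = j) := by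
  by_contra! h
  obtain ⟨⟨i, i', hi, hi', hii'⟩, ⟨j, j', hj, hj', hjj'⟩⟩ := h
  have hfiber : ∀ b, 1 + (if b = x then 1 else 0) + (if b = y then 1 else 0) ≤
      #{a | s a = b} := by
    intro b
    by_cases hbx : b = x
    · subst hbx
      have : 1 < #{a | s a = b} := one_lt_card.2 ⟨i, by simp [hi], i', by simp [hi'], hii'⟩
      simp only [if_true, hxy, if_false]
      omega
    by_cases hby : b = y
    · subst hby
      have : 1 < #{a | s a = b} := one_lt_card.2 ⟨j, by simp [hj], j', by simp [hj'], hjj'⟩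
      simp only [if_true, hbx, if_false]
      omega
    obtain ⟨a, ha⟩ := hs b
    simpa [hbx, hby] using card_pos.2 ⟨a, by simp [ha]⟩
  have hsum := sum_le_sum fun b (_ : b ∈ univ) => hfiber b
  rw [← card_eq_sum_card_fiberwise (by simp)] at hsum
  simp [sum_add_distrib] at hsum
  omega

theorem exists_far_of_two_mul_lt_card {β : Type*} {m : ℕ} (s : Fin m → β) (p : Fin m)
    {T : Finset β} (hp : s p ∉ T) {r : ℕ} (hT : 2 * r < #T) :
    ∃ w ∈ T, ∀ j, s j = w → r < ((p : ℤ) - j).natAbs := by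
  classical
  by_contra! hclose
  set near : Finset (Fin m) := {j | j ≠ p ∧ ((p : ℤ) - j).natAbs ≤ r}
  have hcover : T ⊆ near.image s := by
    intro w hw
    obtain ⟨j, rfl, hj⟩ := hclose w hw
    refine mem_image_of_mem s ?_
    simp only [near, mem_filter, mem_univ, true_and]
    exact ⟨by rintro rfl; exact hp hw, hj⟩
  have hnear : #near ≤ 2 * r := calc
    #near ≤ #((Icc (-r : ℤ) r).erase 0) := by
      refine card_le_card_of_injOn (fun j => (p : ℤ) - j) ?_ ?_
      · intro j hj
        simp only [near, coe_filter, Set.mem_ofPred_eq, mem_univ, true_and] at hj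
        simp only [coe_erase, coe_Icc, Set.mem_sdiff, Set.mem_Icc, Set.mem_singleton_iff]
        omega
      · intro j _ k _ hjk
        exact Fin.ext (by simp only at hjk; omega)
    _ = 2 * r := by simp; omega
  have := (card_le_card hcover).trans (card_image_le.trans hnear)
  omega

theorem exists_adj_forall_far {V : Type*} [Fintype V] [DecidableEq V] (G : SimpleGraph V)
    [DecidableRel G.Adj] {m : ℕ} (s : Fin m → V) {c : V}
    (hc : ∀ i j, s i = c → s j = c → i = j) {r : ℕ} (hr : 2 * r < G.degree c) :
    ∃ w, G.Adj c w ∧ ∀ i j, s i = c → s j = w → r < ((i : ℤ) - j).natAbs := by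
  by_cases hocc : ∃ p, s p = c
  · obtain ⟨p, hp⟩ := hocc
    obtain ⟨w, hw, hfar⟩ :=
      exists_far_of_two_mul_lt_card s p (T := G.neighborFinset c) (by simp [hp]) hr
    refine ⟨w, (G.mem_neighborFinset c w).1 hw, fun i j hi hj => ?_⟩
    rw [hc i p hi hp]
    exact hfar j hj
  · obtain ⟨w, hw⟩ := (G.degree_pos_iff_exists_adj c).1 (by omega)
    exact ⟨w, hw, fun i _ hi => absurd ⟨i, hi⟩ hocc⟩

theorem le_coverLen {n m : ℕ} {s : Fin m → Fin n} {u w : Fin n} (hu : u ∈ Set.range s)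
    (hw : w ∈ Set.range s) {L : ℕ}
    (h : ∀ i j, s i = u → s j = w → L ≤ ((i : ℤ) - j).natAbs + 1) : L ≤ coverLen s u w := by
  obtain ⟨i, hi⟩ := hu
  obtain ⟨j, hj⟩ := hw
  refine le_csInf ⟨_, i, j, hi, hj, rfl⟩ ?_
  rintro _ ⟨i, j, hi, hj, rfl⟩
  exact h i j hi hj

theorem le_Su2 {n m : ℕ} (G : SimpleGraph (Fin n))
    (hm : ∃ s : Fin m → Fin n, Function.Surjective s) {L : ℕ}
    (h : ∀ s : Fin m → Fin n, Function.Surjective s → ∃ u w, G.Adj u w ∧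
      ∀ i j, s i = u → s j = w → L ≤ ((i : ℤ) - j).natAbs + 1) :
    (L : ℝ) / 2 ≤ Su2 G m := by
  obtain ⟨s₀, hs₀⟩ := hm
  refine le_csInf ⟨_, s₀, hs₀, rfl⟩ ?_
  rintro _ ⟨s, hs, rfl⟩
  obtain ⟨u, w, huw, hfar⟩ := h s hs
  have hbdd : BddAbove {x : ℝ | ∃ u w, G.Adj u w ∧ x = (coverLen s u w : ℝ) / 2} :=
    ((Set.finite_range fun e : Fin n × Fin n => (coverLen s e.1 e.2 : ℝ) / 2).subset
      (by rintro _ ⟨u, w, -, rfl⟩; exact ⟨(u, w), rfl⟩)).bddAbove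
  refine le_trans ?_ (le_csSup hbdd ⟨u, w, huw, rfl⟩)
  gcongr
  exact_mod_cast le_coverLen (hs u) (hs w) hfar

instance (N : ℕ) : DecidableRel (exampleGraph N).Adj := fun _ _ =>
  decidable_of_iff' _ (SimpleGraph.fromRel_adj _ _ _)

theorem exampleGraph_degree_a (N : ℕ) :
    (exampleGraph N).degree ⟨8 * N, by omega⟩ = 6 * N + 1 := by
  rw [← SimpleGraph.card_neighborFinset_eq_degree,
    show (exampleGraph N).neighborFinset ⟨8 * N, by omega⟩ =
      (insert (8 * N + 1) (range (6 * N))).attachFin (by simp; omega) by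
      ext v
      rw [SimpleGraph.mem_neighborFinset]
      simp [exampleGraph, Fin.ext_iff]; omega]
  rw [card_attachFin, card_insert_of_notMem (by simp; omega), card_range]

theorem exampleGraph_degree_b (N : ℕ) :
    (exampleGraph N).degree ⟨8 * N + 1, by omega⟩ = 6 * N + 1 := by
  rw [← SimpleGraph.card_neighborFinset_eq_degree,
    show (exampleGraph N).neighborFinset ⟨8 * N + 1, by omega⟩ =
      (insert (8 * N) (Ico (2 * N) (8 * N))).attachFin (by simp; omega) by
      ext v
      rw [SimpleGraph.mem_neighborFinset]
      simp [exampleGraph, Fin.ext_iff]; omega]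
  rw [card_attachFin, card_insert_of_notMem (by simp), Nat.card_Ico]
  omega

theorem exampleGraph_exists_far_edge {N : ℕ} (s : Fin (8 * N + 3) → Fin (8 * N + 2))
    (hs : Function.Surjective s) :
    ∃ u w, (exampleGraph N).Adj u w ∧
      ∀ i j, s i = u → s j = w → 3 * N + 2 ≤ ((i : ℤ) - j).natAbs + 1 := by
  have hdeg_a := exampleGraph_degree_a N
  have hdeg_b := exampleGraph_degree_b N
  rcases subsingleton_fiber_or_of_card_le_succ hs (by simp)
    (x := ⟨8 * N, by omega⟩) (y := ⟨8 * N + 1, by omega⟩) (by simp) with hc | hc <;>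
  · obtain ⟨w, hw, hfar⟩ :=
      exists_adj_forall_far (exampleGraph N) s hc (r := 3 * N) (by omega)
    exact ⟨_, w, hw, fun i j hi hj => by have := hfar i j hi hj; omega⟩

theorem example1_uncoded_lower_bound_general {N : ℕ} :
    (∀ s : Fin (8 * N + 3) → Fin (8 * N + 2), Function.Surjective s →
      ∃ u w : Fin (8 * N + 2), (exampleGraph N).Adj u w ∧
        ∀ i j : Fin (8 * N + 3), s i = u → s j = w →
          3 * N + 2 ≤ ((i.val : ℤ) - (j.val : ℤ)).natAbs + 1) ∧
    ((3 * N + 2 : ℝ) / 2 ≤ Su2 (exampleGraph N) (8 * N + 3)) := by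
  have hsurj :=
    Function.invFun_surjective (Fin.castLE_injective (by omega : 8 * N + 2 ≤ 8 * N + 3))
  exact ⟨exampleGraph_exists_far_edge,
    by exact_mod_cast le_Su2 _ ⟨_, hsurj⟩ exampleGraph_exists_far_edge⟩

/-- In Example 1's graph, every uncoded store of length `n + 1 = 8N + 3`
(surjective onto the `8N + 2` vertices) has some edge whose every covering
interval has length at least `3N + 2`; hence `S^u_2(G, n+1) ≥ (3N+2)/2`. -/
theorem example1_uncoded_lower_bound {N : ℕ} (hN : 1 ≤ N) :
    (∀ s : Fin (8 * N + 3) → Fin (8 * N + 2), Function.Surjective s →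
      ∃ u w : Fin (8 * N + 2), (exampleGraph N).Adj u w ∧
        ∀ i j : Fin (8 * N + 3), s i = u → s j = w →
          3 * N + 2 ≤ ((i.val : ℤ) - (j.val : ℤ)).natAbs + 1) ∧
    ((3 * N + 2 : ℝ) / 2 ≤ Su2 (exampleGraph N) (8 * N + 3)) :=
  example1_uncoded_lower_bound_general
end
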